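/- Let K be an n×n real symmetric positive semidefinite matrix and C̄ ∈ R^{n×c} any matrix with rank(C̄) < n. Define δ^{ss} = (tr(K) − tr(C̄† K C̄))/(n − rank(C̄)) and U^{ss} = C̄† K (C̄†)^T − δ^{ss} (C̄^T C̄)†. Then the matrix C̄ U^{ss} C̄^T + δ^{ss} I_n is symmetric positive semidefinite; moreover, if K is positive definite, then C̄ U^{ss} C̄^T + δ^{ss} I_n is positive definite. -/

import Mathlib

open Matrix BigOperators
open scoped Classical

noncomputable section

/-- `B` satisfies the four Penrose conditions for `A`. -/
def IsMoorePenrose {m n : Type*} [Fintype m] [Fintype n]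
    (A : Matrix m n ℝ) (B : Matrix n m ℝ) : Prop :=
  A * B * A = A ∧ B * A * B = B ∧ (A * B)ᵀ = A * B ∧ (B * A)ᵀ = B * A

/-- The Moore–Penrose pseudoinverse of a real matrix (defined via the unique
matrix satisfying the four Penrose conditions, which always exists). -/
def pinv {m n : Type*} [Fintype m] [Fintype n] (A : Matrix m n ℝ) : Matrix n m ℝ :=
  if h : ∃ B, IsMoorePenrose A B then h.choose else 0

/-- Squared Frobenius norm. -/
def frobSq {m n : Type*} [Fintype m] [Fintype n] (A : Matrix m n ℝ) : ℝ :=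
  ∑ i, ∑ j, (A i j) ^ 2

/-- Frobenius norm. -/
def frobNorm {m n : Type*} [Fintype m] [Fintype n] (A : Matrix m n ℝ) : ℝ :=
  Real.sqrt (frobSq A)

/-- Eigenvalues of a (hermitian) real matrix, sorted in descending order
(junk value `0` if the matrix is not hermitian). -/
def eigsDesc {n : ℕ} (A : Matrix (Fin n) (Fin n) ℝ) : Fin n → ℝ :=
  if hA : A.IsHermitian then
    fun i => hA.eigenvalues (Tuple.sort (fun j => -hA.eigenvalues j) i)
  else 0

/-- Singular values of a real matrix, sorted in descending order. -/
def svalsDesc {m n : ℕ} (A : Matrix (Fin m) (Fin n) ℝ) : Fin n → ℝ :=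
  fun i => Real.sqrt (eigsDesc (Aᵀ * A) i)

/-- Spectral norm (largest singular value). -/
def specNorm {m n : ℕ} (A : Matrix (Fin m) (Fin n) ℝ) : ℝ := ⨆ i, svalsDesc A i

/-- `Ak` is a best rank-`k` approximation of `A` in Frobenius norm. -/
def IsBestRankApprox {m n : Type*} [Fintype m] [Fintype n]
    (A Ak : Matrix m n ℝ) (k : ℕ) : Prop :=
  Ak.rank ≤ k ∧ ∀ X : Matrix m n ℝ, X.rank ≤ k → frobSq (A - Ak) ≤ frobSq (A - X)

/-- `P` is a column selection matrix: each column is a distinct standard basis vector. -/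
def IsColSelection {n c : ℕ} (P : Matrix (Fin n) (Fin c) ℝ) : Prop :=
  ∃ f : Fin c → Fin n, Function.Injective f ∧
    P = Matrix.of fun i j => if i = f j then 1 else 0

/-- Adaptive sampling probabilities for a residual matrix `B`
(uniform in the degenerate case `B = 0`). -/
def adaptP {m n : Type*} [Fintype m] [Fintype n] (B : Matrix m n ℝ) : n → ℝ :=
  fun j => if frobSq B = 0 then (Fintype.card n : ℝ)⁻¹ else (∑ i, (B i j) ^ 2) / frobSq B

/-- Uniform sampling matrix with entries `√(n/s)` at positions `(t j, j)`. -/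
def uSamp (n : ℕ) {s : ℕ} (t : Fin s → Fin n) : Matrix (Fin n) (Fin s) ℝ :=
  Matrix.of fun i j => if i = t j then Real.sqrt ((n : ℝ) / s) else 0

/-- Weighted sampling matrix with entries `1/√(s p i)` at positions `(t j, j)`. -/
def wSamp {n s : ℕ} (p : Fin n → ℝ) (t : Fin s → Fin n) : Matrix (Fin n) (Fin s) ℝ :=
  Matrix.of fun i j => if i = t j then 1 / Real.sqrt (s * p i) else 0

end

/-! With `P = C̄ C̄†` the orthogonal projection onto the column space of `C̄`, the Penrose
identities give `(C̄ᵀ C̄)† = C̄† C̄†ᵀ`, hence `C̄ Uˢˢ C̄ᵀ + δˢˢ I = P K P + δˢˢ (I - P)`, and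
`tr K - tr (C̄† K C̄) = tr ((I - P) K (I - P))`. This trace is nonnegative, and positive when `K` is
positive definite because `rank P ≤ rank C̄ < n` forces `I - P ≠ 0`; so `δˢˢ ≥ 0`, resp. `δˢˢ > 0`.
Finally `xᵀ (P K P + δ (I - P)) x = (P x)ᵀ K (P x) + δ ‖(I - P) x‖²`, and `x = P x + (I - P) x`.

The pseudoinverse exists: for symmetric `S` it is `t ↦ t⁻¹` (with `0⁻¹ = 0`) applied to `S` by the
functional calculus, and in general `A† = (Aᵀ A)† Aᵀ`. -/

namespace IsMoorePenrose

variable {m n : Type*} [Fintype m] [Fintype n] {A : Matrix m n ℝ} {B B' : Matrix n m ℝ}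

theorem mul_left_eq (hB : IsMoorePenrose A B) (hB' : IsMoorePenrose A B') : A * B = A * B' :=
  calc A * B = (A * B' * A * B)ᵀ := by rw [hB'.1, hB.2.2.1]
    _ = A * B * (A * B') := by
      rw [Matrix.mul_assoc, transpose_mul, hB.2.2.1, hB'.2.2.1]
    _ = A * B' := by rw [← Matrix.mul_assoc, hB.1]

theorem mul_right_eq (hB : IsMoorePenrose A B) (hB' : IsMoorePenrose A B') : B * A = B' * A :=
  calc B * A = (B * (A * B' * A))ᵀ := by rw [hB'.1, hB.2.2.2]
    _ = B' * A * (B * A) := by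
      rw [← Matrix.mul_assoc, ← Matrix.mul_assoc, Matrix.mul_assoc _ B', transpose_mul,
        hB.2.2.2, hB'.2.2.2]
    _ = B' * A := by rw [Matrix.mul_assoc, ← Matrix.mul_assoc A, hB.1]

theorem unique (hB : IsMoorePenrose A B) (hB' : IsMoorePenrose A B') : B = B' :=
  calc B = B * A * B := hB.2.1.symm
    _ = B' * A * B' := by
      rw [Matrix.mul_assoc, hB.mul_left_eq hB', ← Matrix.mul_assoc, hB.mul_right_eq hB']
    _ = B' := hB'.2.1

theorem transpose_mul_self (hB : IsMoorePenrose A B) : IsMoorePenrose (Aᵀ * A) (B * Bᵀ) := by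
  obtain ⟨h₁, h₂, h₃, h₄⟩ := hB
  have hleft : Aᵀ * A * (B * Bᵀ) = B * A :=
    calc Aᵀ * A * (B * Bᵀ) = Aᵀ * (A * B)ᵀ * Bᵀ := by simp only [h₃, Matrix.mul_assoc]
      _ = (B * A * B * A)ᵀ := by simp only [transpose_mul, Matrix.mul_assoc]
      _ = B * A := by rw [h₂, h₄]
  have hright : B * Bᵀ * (Aᵀ * A) = B * A :=
    calc B * Bᵀ * (Aᵀ * A) = B * (A * B)ᵀ * A := by
          simp only [transpose_mul, Matrix.mul_assoc]
      _ = B * A := by rw [h₃, ← Matrix.mul_assoc, h₂]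
  refine ⟨?_, ?_, by rw [hleft, h₄], by rw [hright, h₄]⟩
  · rw [Matrix.mul_assoc, hright, Matrix.mul_assoc, ← Matrix.mul_assoc A, h₁]
  · rw [hright, ← Matrix.mul_assoc, h₂]

end IsMoorePenrose

section Existence

variable {m n : Type*} [Fintype m] [Fintype n]

theorem Matrix.IsHermitian.isMoorePenrose_cfc_inv {S : Matrix n n ℝ} (hS : S.IsHermitian) :
    IsMoorePenrose S (cfc (·⁻¹ : ℝ → ℝ) S) := by
  have hS' := hS.isSelfAdjoint
  have hsymm (f : ℝ → ℝ) : (cfc f S)ᵀ = cfc f S := IsSymm.eq (cfc_predicate f S)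
  have hmul (f g : ℝ → ℝ) : cfc f S * cfc g S = cfc (fun x ↦ f x * g x) S :=
    (cfc_mul f g S (S.finite_real_spectrum.continuousOn f)
      (S.finite_real_spectrum.continuousOn g)).symm
  have hmul₃ (f g h : ℝ → ℝ) :
      cfc f S * cfc g S * cfc h S = cfc (fun x ↦ f x * g x * h x) S := by rw [hmul, hmul]
  have hid : cfc (fun x : ℝ ↦ x) S = S := cfc_id' ℝ S
  refine ⟨?_, ?_, ?_, ?_⟩
  · simpa only [hid, mul_inv_mul_cancel] using hmul₃ (fun x ↦ x) (·⁻¹) (fun x ↦ x)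
  · have hinv (x : ℝ) : x⁻¹ * x * x⁻¹ = x⁻¹ := by simpa using mul_inv_mul_cancel x⁻¹
    simpa only [hid, hinv] using hmul₃ (·⁻¹) (fun x ↦ x) (·⁻¹)
  · simpa only [← hmul, hid] using hsymm (fun x ↦ x * x⁻¹)
  · simpa only [← hmul, hid] using hsymm (fun x ↦ x⁻¹ * x)

theorem exists_isMoorePenrose (A : Matrix m n ℝ) : ∃ B, IsMoorePenrose A B := by
  have hS : (Aᵀ * A).IsHermitian := by simpa using isHermitian_conjTranspose_mul_self A
  obtain ⟨h₁, h₂, -, h₄⟩ := hS.isMoorePenrose_cfc_inv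
  set T := cfc (·⁻¹ : ℝ → ℝ) (Aᵀ * A)
  have hT : Tᵀ = T := IsSymm.eq (cfc_predicate _ _)
  -- `A (T Aᵀ A - 1)` has zero Gram matrix because `Aᵀ A (T Aᵀ A - 1) = 0`.
  have hATS : A * T * (Aᵀ * A) = A := by
    have hgram : (A * (T * (Aᵀ * A) - 1))ᵀ * (A * (T * (Aᵀ * A) - 1)) = 0 := by
      rw [transpose_mul, Matrix.mul_assoc, ← Matrix.mul_assoc Aᵀ, Matrix.mul_sub,
        ← Matrix.mul_assoc _ T, h₁, Matrix.mul_one, sub_self, Matrix.mul_zero]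
    rw [← conjTranspose_eq_transpose_of_trivial, conjTranspose_mul_self_eq_zero, Matrix.mul_sub,
      Matrix.mul_one, sub_eq_zero, ← Matrix.mul_assoc] at hgram
    exact hgram
  refine ⟨T * Aᵀ, ?_, ?_, ?_, ?_⟩
  · calc A * (T * Aᵀ) * A = A * T * (Aᵀ * A) := by simp only [Matrix.mul_assoc]
      _ = A := hATS
  · calc T * Aᵀ * A * (T * Aᵀ) = T * (Aᵀ * A) * T * Aᵀ := by simp only [Matrix.mul_assoc]
      _ = T * Aᵀ := by rw [h₂]
  · rw [transpose_mul, transpose_mul, transpose_transpose, hT, Matrix.mul_assoc]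
  · rw [Matrix.mul_assoc, h₄]

end Existence

section Pseudoinverse

variable {m n : Type*} [Fintype m] [Fintype n] {A : Matrix m n ℝ} {B : Matrix n m ℝ}

theorem isMoorePenrose_pinv (A : Matrix m n ℝ) : IsMoorePenrose A (pinv A) := by
  rw [pinv, dif_pos (exists_isMoorePenrose A)]
  exact (exists_isMoorePenrose A).choose_spec

theorem IsMoorePenrose.pinv_eq (h : IsMoorePenrose A B) : pinv A = B :=
  (isMoorePenrose_pinv A).unique h

theorem pinv_transpose_mul_self (A : Matrix m n ℝ) : pinv (Aᵀ * A) = pinv A * (pinv A)ᵀ :=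
  (isMoorePenrose_pinv A).transpose_mul_self.pinv_eq

theorem IsMoorePenrose.mul_mul_transpose_mul (h : IsMoorePenrose A B) (X : Matrix m m ℝ) :
    A * (B * X * Bᵀ) * Aᵀ = A * B * X * (A * B) :=
  calc _ = A * B * X * (A * B)ᵀ := by rw [transpose_mul]; simp only [Matrix.mul_assoc]
    _ = _ := by rw [h.2.2.1]

theorem IsMoorePenrose.isStarProjection_mul (h : IsMoorePenrose A B) :
    IsStarProjection (A * B) where
  isIdempotentElem := by rw [IsIdempotentElem, ← Matrix.mul_assoc, h.1]
  isSelfAdjoint := by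
    rw [IsSelfAdjoint, star_eq_conjTranspose, conjTranspose_eq_transpose_of_trivial, h.2.2.1]

end Pseudoinverse

section Projection

open scoped ComplexOrder

variable {m n 𝕜 : Type*} [Fintype m] [Fintype n] [RCLike 𝕜]

theorem Matrix.star_dotProduct_conjTranspose_mul_mul_mulVec (A : Matrix n n 𝕜)
    (B : Matrix n m 𝕜) (x : m → 𝕜) :
    star x ⬝ᵥ ((Bᴴ * A * B) *ᵥ x) = star (B *ᵥ x) ⬝ᵥ (A *ᵥ (B *ᵥ x)) := by
  simp only [star_mulVec, dotProduct_mulVec, vecMul_vecMul]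

theorem Matrix.PosDef.trace_conjTranspose_mul_mul_same_pos {A : Matrix n n 𝕜} (hA : A.PosDef)
    {B : Matrix n m 𝕜} (hB : B ≠ 0) : 0 < (Bᴴ * A * B).trace := by
  have hBAB := hA.posSemidef.conjTranspose_mul_mul_same B
  refine hBAB.trace_nonneg.lt_of_ne' fun htr ↦ hB (mulVec_injective (funext fun x ↦ ?_))
  rw [hBAB.trace_eq_zero_iff] at htr
  by_contra hx
  rw [zero_mulVec] at hx
  have hpos := hA.dotProduct_mulVec_pos hx
  rw [← star_dotProduct_conjTranspose_mul_mul_mulVec, htr, zero_mulVec, dotProduct_zero] at hpos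
  exact hpos.false

theorem Matrix.PosDef.conjTranspose_mul_mul_same_add [DecidableEq n] {A B P Q : Matrix n n 𝕜}
    (hA : A.PosDef) (hB : B.PosDef) (hPQ : P + Q = 1) : (Pᴴ * A * P + Qᴴ * B * Q).PosDef := by
  refine .of_dotProduct_mulVec_pos ((hA.posSemidef.conjTranspose_mul_mul_same P).add
    (hB.posSemidef.conjTranspose_mul_mul_same Q)).isHermitian fun x hx ↦ ?_
  rw [add_mulVec, dotProduct_add, star_dotProduct_conjTranspose_mul_mul_mulVec,
    star_dotProduct_conjTranspose_mul_mul_mulVec]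
  by_cases hPx : P *ᵥ x = 0
  · have hQx : Q *ᵥ x = x := by rw [← zero_add (Q *ᵥ x), ← hPx, ← add_mulVec, hPQ, one_mulVec]
    exact add_pos_of_nonneg_of_pos (hA.posSemidef.dotProduct_mulVec_nonneg _)
      (hB.dotProduct_mulVec_pos (by rwa [hQx]))
  · exact add_pos_of_pos_of_nonneg (hA.dotProduct_mulVec_pos hPx)
      (hB.posSemidef.dotProduct_mulVec_nonneg _)

namespace IsStarProjection

variable {P : Matrix n n 𝕜}

theorem conjTranspose_eq (hP : IsStarProjection P) : Pᴴ = P := hP.isSelfAdjoint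

theorem trace_conjTranspose_mul_mul_same (hP : IsStarProjection P) (K : Matrix n n 𝕜) :
    (Pᴴ * K * P).trace = (P * K).trace := by
  rw [hP.conjTranspose_eq, trace_mul_comm, ← Matrix.mul_assoc, hP.isIdempotentElem.eq]

variable [DecidableEq n]

theorem conj_add_smul_one_sub_eq (hP : IsStarProjection P) (K : Matrix n n 𝕜) (δ : 𝕜) :
    P * K * P + δ • (1 - P) = Pᴴ * K * P + (1 - P)ᴴ * (δ • 1) * (1 - P) := by
  rw [hP.conjTranspose_eq, hP.one_sub.conjTranspose_eq, Matrix.mul_smul, Matrix.mul_one,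
    Matrix.smul_mul, hP.one_sub.isIdempotentElem.eq]

theorem posSemidef_conj_add_smul_one_sub (hP : IsStarProjection P) {K : Matrix n n 𝕜}
    (hK : K.PosSemidef) {δ : 𝕜} (hδ : 0 ≤ δ) : (P * K * P + δ • (1 - P)).PosSemidef := by
  rw [hP.conj_add_smul_one_sub_eq]
  exact (hK.conjTranspose_mul_mul_same P).add
    ((PosSemidef.one.smul hδ).conjTranspose_mul_mul_same _)

theorem posDef_conj_add_smul_one_sub (hP : IsStarProjection P) {K : Matrix n n 𝕜}
    (hK : K.PosDef) {δ : 𝕜} (hδ : 0 < δ) : (P * K * P + δ • (1 - P)).PosDef := by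
  rw [hP.conj_add_smul_one_sub_eq]
  exact hK.conjTranspose_mul_mul_same_add (PosDef.one.smul hδ) (add_sub_cancel P 1)

end IsStarProjection

end Projection

theorem Matrix.one_sub_mul_ne_zero_of_rank_lt {m k K : Type*} [Fintype m] [Fintype k]
    [DecidableEq m] [Field K] {A : Matrix m k K} (B : Matrix k m K)
    (h : A.rank < Fintype.card m) : 1 - A * B ≠ 0 := by
  intro hAB
  have := rank_mul_le_left A B
  rw [← sub_eq_zero.mp hAB, rank_one] at this
  exact this.not_gt h

/-- The spectral shifting approximation `C̄ Uss C̄ᵀ + δss Iₙ` is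
positive semidefinite, and positive definite when `K` is. -/
theorem spectral_shifting_posSemidef {n c : ℕ}
    (K : Matrix (Fin n) (Fin n) ℝ) (hK : K.PosSemidef)
    (Cbar : Matrix (Fin n) (Fin c) ℝ) (hrank : Cbar.rank < n)
    (δss : ℝ) (hδss : δss = (K.trace - (pinv Cbar * K * Cbar).trace) / ((n : ℝ) - Cbar.rank))
    (Uss : Matrix (Fin c) (Fin c) ℝ)
    (hUss : Uss = pinv Cbar * K * (pinv Cbar)ᵀ - δss • pinv (Cbarᵀ * Cbar)) :
    (Cbar * Uss * Cbarᵀ + δss • (1 : Matrix (Fin n) (Fin n) ℝ)).PosSemidef ∧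
      (K.PosDef → (Cbar * Uss * Cbarᵀ + δss • (1 : Matrix (Fin n) (Fin n) ℝ)).PosDef) := by
  have hMP := isMoorePenrose_pinv Cbar
  set P := Cbar * pinv Cbar
  have hP : IsStarProjection P := hMP.isStarProjection_mul
  have hM : Cbar * Uss * Cbarᵀ + δss • 1 = P * K * P + δss • (1 - P) := by
    have hP₁ := hMP.mul_mul_transpose_mul 1
    rw [Matrix.mul_one, Matrix.mul_one, hP.isIdempotentElem.eq] at hP₁
    rw [hUss, pinv_transpose_mul_self, Matrix.mul_sub, Matrix.sub_mul, Matrix.mul_smul,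
      Matrix.smul_mul, hMP.mul_mul_transpose_mul, hP₁, smul_sub]
    abel
  have hnum : K.trace - (pinv Cbar * K * Cbar).trace = ((1 - P)ᴴ * K * (1 - P)).trace := by
    rw [hP.one_sub.trace_conjTranspose_mul_mul_same, Matrix.sub_mul, Matrix.one_mul, trace_sub,
      trace_mul_comm, Matrix.mul_assoc]
  have hden : 0 < (n : ℝ) - Cbar.rank := sub_pos.mpr (by exact_mod_cast hrank)
  rw [hM, hδss, hnum]
  refine ⟨hP.posSemidef_conj_add_smul_one_sub hK ?_,
    fun hK' ↦ hP.posDef_conj_add_smul_one_sub hK' ?_⟩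
  · exact div_nonneg (hK.conjTranspose_mul_mul_same _).trace_nonneg hden.le
  · refine div_pos (hK'.trace_conjTranspose_mul_mul_same_pos ?_) hden
    exact one_sub_mul_ne_zero_of_rank_lt _ (by simpa using hrank)
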